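/- If (2 - √2)/(2√2) < r ≤ -1/2 + √(2/(5 - √5)), then ⌈2π/θ⌉ = 5 where θ = arccos(1 - 1/(2(1/2 + r)²)); equivalently 2π/5 ≤ θ < π/2. -/
import Mathlib

open Real

theorem radial_chromatic_five (r : ℝ) (hr0 : (2 - Real.sqrt 2) / (2 * Real.sqrt 2) < r)
    (hr1 : r ≤ -(1 / 2) + Real.sqrt (2 / (5 - Real.sqrt 5))) :
    ⌈2 * Real.pi / Real.arccos (1 - 1 / (2 * (1 / 2 + r) ^ 2))⌉₊ = 5 ∧
      2 * Real.pi / 5 ≤ Real.arccos (1 - 1 / (2 * (1 / 2 + r) ^ 2)) ∧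
      Real.arccos (1 - 1 / (2 * (1 / 2 + r) ^ 2)) < Real.pi / 2 := by
  have s2 : Real.sqrt 2 ^ 2 = 2 := Real.sq_sqrt (by norm_num)
  have s2pos : 0 < Real.sqrt 2 := Real.sqrt_pos.2 (by norm_num)
  have s5 : Real.sqrt 5 ^ 2 = 5 := Real.sq_sqrt (by norm_num)
  have s5lt : Real.sqrt 5 < 3 := by
    nlinarith [Real.sqrt_nonneg 5]
  have s5gt : 2 < Real.sqrt 5 := by
    nlinarith [Real.sqrt_nonneg 5]
  set ρ : ℝ := 1 / 2 + r with hρ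
  clear_value ρ
  -- lower bound: ρ > √2 / 2
  have hρlb : Real.sqrt 2 / 2 < ρ := by
    have : (2 - Real.sqrt 2) / (2 * Real.sqrt 2) = (Real.sqrt 2 - 1) / 2 := by
      rw [div_eq_div_iff (by positivity) (by norm_num)]
      nlinarith
    rw [this] at hr0
    simp only [hρ]; linarith
  have hρpos : 0 < ρ := lt_trans (by positivity) hρlb
  have h2ρ : 1 < 2 * ρ ^ 2 := by
    have h := pow_lt_pow_left₀ hρlb (by positivity : (0:ℝ) ≤ Real.sqrt 2 / 2) two_ne_zero
    have h2 : (Real.sqrt 2 / 2) ^ 2 = 1 / 2 := by rw [div_pow, s2]; norm_num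
    rw [h2] at h
    linarith
  -- upper bound
  have hden : (0:ℝ) < 5 - Real.sqrt 5 := by linarith
  have hR : Real.sqrt (2 / (5 - Real.sqrt 5)) ^ 2 = 2 / (5 - Real.sqrt 5) :=
    Real.sq_sqrt (by positivity)
  have hρub : ρ ^ 2 ≤ 2 / (5 - Real.sqrt 5) := by
    have h1 : ρ ≤ Real.sqrt (2 / (5 - Real.sqrt 5)) := by simp only [hρ]; linarith
    nlinarith [Real.sqrt_nonneg (2 / (5 - Real.sqrt 5))]
  set x : ℝ := 1 - 1 / (2 * ρ ^ 2) with hx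
  clear_value x
  have hxpos : 0 < x := by
    have : 1 / (2 * ρ ^ 2) < 1 := by
      rw [div_lt_one (by positivity)]; exact h2ρ
    simp only [hx]; linarith
  have hxub : x ≤ (Real.sqrt 5 - 1) / 4 := by
    have h1 : (5 - Real.sqrt 5) / 4 ≤ 1 / (2 * ρ ^ 2) := by
      rw [div_le_div_iff₀ (by norm_num) (by positivity)]
      rw [le_div_iff₀ hden] at hρub
      nlinarith
    simp only [hx]; linarith
  have hcos : Real.cos (2 * π / 5) = (Real.sqrt 5 - 1) / 4 := by
    have h1 : Real.cos (π / 5) = (1 + Real.sqrt 5) / 4 := Real.cos_pi_div_five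
    have h2 : 2 * π / 5 = 2 * (π / 5) := by ring
    rw [h2, Real.cos_two_mul, h1]
    nlinarith
  have harc : Real.arccos ((Real.sqrt 5 - 1) / 4) = 2 * π / 5 :=
    Real.arccos_eq_of_eq_cos (by positivity) (by nlinarith [pi_pos]) hcos.symm
  have hθlb : 2 * π / 5 ≤ Real.arccos x := by
    rw [← harc]
    rcases eq_or_lt_of_le hxub with h | h
    · rw [h]
    · have hx1 : x ≤ 1 := by
        have h0 : 0 < 1 / (2 * ρ ^ 2) := by positivity
        simp only [hx]; linarith
      exact le_of_lt (Real.strictAntiOn_arccos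
        ⟨by linarith, hx1⟩ ⟨by linarith, by linarith⟩ h)
  have hθub : Real.arccos x < π / 2 := Real.arccos_lt_pi_div_two.2 hxpos
  refine ⟨?_, hθlb, hθub⟩
  have hθpos : 0 < Real.arccos x := lt_of_lt_of_le (by positivity) hθlb
  rw [Nat.ceil_eq_iff (by norm_num)]
  constructor
  · push_cast
    rw [lt_div_iff₀ hθpos]
    norm_num
    linarith
  · push_cast
    rw [div_le_iff₀ hθpos]
    linarith
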